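/- arXiv:2504.03033 — 4 statements merged into one kernel-verified Lean document; each statement's English description precedes it below -/
import Mathlib

section
/- The subspace T of V spanned by the standard basis vectors e₁, e₂, e₃ is closed under the multiplication ⋆: for all x, y ∈ T, x ⋆ y ∈ T. -/
open Matrix

/-- The seven matrices `A₁,…,A₇` over `F₂ = ZMod 2` (indexed by `Fin 7`). -/
def A : Fin 7 → Matrix (Fin 7) (Fin 7) (ZMod 2)
  | 0 => 1
  | 1 => !![0,0,1,0,0,0,0; 1,0,1,0,0,0,0; 0,1,0,0,0,0,0; 0,0,0,1,1,1,1;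
            0,0,0,1,0,1,0; 0,0,0,0,0,1,1; 0,0,0,0,0,1,0]
  | 2 => !![0,1,0,0,0,0,0; 0,1,1,0,0,0,0; 1,0,1,0,0,0,0; 0,0,0,0,1,0,0;
            0,0,0,1,1,0,0; 0,0,0,1,1,1,1; 0,0,0,1,0,1,0]
  | 3 => !![0,0,0,1,1,0,0; 0,0,0,1,1,1,0; 0,0,0,0,1,0,1; 1,0,0,0,0,0,1;
            0,0,1,0,0,1,0; 0,1,1,1,0,1,1; 0,0,0,1,1,0,1]
  | 4 => !![0,0,0,0,1,0,0; 0,0,0,0,1,1,1; 0,0,0,1,0,1,0; 0,0,1,0,0,1,1;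
            1,0,1,0,0,0,1; 0,0,0,0,1,1,0; 0,1,1,1,0,1,1]
  | 5 => !![0,0,0,1,0,1,1; 0,0,0,1,1,0,0; 0,0,0,0,1,0,0; 0,0,0,1,0,1,0;
            0,1,1,1,1,1,1; 1,0,1,0,1,1,0; 0,0,1,1,0,1,1]
  | 6 => !![0,0,0,1,1,0,1; 0,0,0,0,1,0,0; 0,0,0,1,0,0,0; 0,1,1,0,1,0,1;
            0,1,1,1,0,1,0; 0,0,1,1,1,0,1; 1,0,0,0,1,1,0]

/-- The multiplication `x ⋆ y = (∑ i, xᵢ Aᵢ) ·ᵥ y` on `V = F₂⁷`. -/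
def star (x y : Fin 7 → ZMod 2) : Fin 7 → ZMod 2 := (∑ i, x i • A i) *ᵥ y

/-- The standard basis vectors of `V = F₂⁷`. -/
def e (i : Fin 7) : Fin 7 → ZMod 2 := Pi.single i 1

lemma star_add_left (x x' y : Fin 7 → ZMod 2) :
    star (x + x') y = star x y + star x' y := by
  simp [_root_.star, add_smul, Finset.sum_add_distrib, add_mulVec]

lemma star_smul_left (c : ZMod 2) (x y : Fin 7 → ZMod 2) :
    star (c • x) y = c • star x y := by
  simp [_root_.star, ← smul_mulVec, Finset.smul_sum, smul_smul]

lemma star_add_right (x y y' : Fin 7 → ZMod 2) :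
    star x (y + y') = star x y + star x y' := by
  simp [_root_.star, mulVec_add]

lemma star_smul_right (c : ZMod 2) (x y : Fin 7 → ZMod 2) :
    star x (c • y) = c • star x y := by
  simp [_root_.star, mulVec_smul]

theorem stmt_6 :
    ∀ x y : Fin 7 → ZMod 2,
      x ∈ Submodule.span (ZMod 2) {e 0, e 1, e 2} →
      y ∈ Submodule.span (ZMod 2) {e 0, e 1, e 2} →
      star x y ∈ Submodule.span (ZMod 2) {e 0, e 1, e 2} := by
  intro x y hx hy
  have h0 : e 0 ∈ Submodule.span (ZMod 2) {e 0, e 1, e 2} :=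
    Submodule.subset_span (by simp)
  have h1 : e 1 ∈ Submodule.span (ZMod 2) {e 0, e 1, e 2} :=
    Submodule.subset_span (by simp)
  have h2 : e 2 ∈ Submodule.span (ZMod 2) {e 0, e 1, e 2} :=
    Submodule.subset_span (by simp)
  induction hx using Submodule.span_induction with
  | mem x hx =>
    induction hy using Submodule.span_induction with
    | mem y hy =>
      rcases hx with rfl | rfl | rfl <;> rcases hy with rfl | rfl | rfl
      · have : star (e 0) (e 0) = e 0 := by decide
        rw [this]; exact h0
      · have : star (e 0) (e 1) = e 1 := by decide
        rw [this]; exact h1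
      · have : star (e 0) (e 2) = e 2 := by decide
        rw [this]; exact h2
      · have : star (e 1) (e 0) = e 1 := by decide
        rw [this]; exact h1
      · have : star (e 1) (e 1) = e 2 := by decide
        rw [this]; exact h2
      · have : star (e 1) (e 2) = e 0 + e 1 := by decide
        rw [this]; exact Submodule.add_mem _ h0 h1
      · have : star (e 2) (e 0) = e 2 := by decide
        rw [this]; exact h2
      · have : star (e 2) (e 1) = e 0 + e 1 := by decide
        rw [this]; exact Submodule.add_mem _ h0 h1
      · have : star (e 2) (e 2) = e 1 + e 2 := by decide
        rw [this]; exact Submodule.add_mem _ h1 h2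
    | zero =>
      have : star x 0 = 0 := by simp [_root_.star]
      rw [this]; exact Submodule.zero_mem _
    | add y y' _ _ hy hy' =>
      rw [star_add_right]; exact Submodule.add_mem _ hy hy'
    | smul c y _ hy =>
      rw [star_smul_right]; exact Submodule.smul_mem _ _ hy
  | zero =>
    have : star 0 y = 0 := by simp [_root_.star]
    rw [this]; exact Submodule.zero_mem _
  | add x x' _ _ hx hx' =>
    rw [star_add_left]; exact Submodule.add_mem _ hx hx'
  | smul c x _ hx =>
    rw [star_smul_left]; exact Submodule.smul_mem _ _ hx
end

section
/- There exists an injective map φ : GF(8) → V (from the Galois field with 8 elements, e.g., GaloisField 2 3) such that φ is additive (φ(x + y) = φ(x) + φ(y) for all x, y), φ(1) = e₁, φ(x·y) = φ(x) ⋆ φ(y) for all x, y ∈ GF(8), and the image of φ is exactly the F₂-subspace of V spanned by e₁, e₂, e₃. In other words, (V, +, ⋆) contains a copy of the field F₈ as a subsemifield. -/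
open Matrix

set_option maxHeartbeats 2000000

/-! ### An explicit model `K` of `GF(8)` on `Fin 8` -/

def K : Type := Fin 8

instance : DecidableEq K := instDecidableEqFin 8
instance : Fintype K := Fin.fintype 8

def gmul (a b : Nat) : Nat :=
  let c := (if a &&& 1 = 1 then b else 0) ^^^ (if a &&& 2 = 2 then 2*b else 0) ^^^
           (if a &&& 4 = 4 then 4*b else 0)
  let c := if c &&& 16 = 16 then c ^^^ 22 else c
  if c &&& 8 = 8 then c ^^^ 11 else c



instance : Zero K := ⟨(0 : Fin 8)⟩
instance : One K := ⟨(1 : Fin 8)⟩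
instance : Add K := ⟨fun a b => ⟨(Fin.val (a : Fin 8) ^^^ Fin.val (b : Fin 8)) % 8, Nat.mod_lt _ (by decide)⟩⟩
instance : Mul K := ⟨fun a b => ⟨gmul (Fin.val (a : Fin 8)) (Fin.val (b : Fin 8)) % 8, Nat.mod_lt _ (by decide)⟩⟩
instance : Neg K := ⟨fun a => a⟩

instance : CommRing K where
  add_assoc := by decide
  zero_add := by decide
  add_zero := by decide
  add_comm := by decide
  mul_assoc := by decide
  one_mul := by decide
  mul_one := by decide
  mul_comm := by decide
  left_distrib := by decide
  right_distrib := by decide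
  zero_mul := by decide
  mul_zero := by decide
  neg_add_cancel := by decide
  nsmul := nsmulRec
  zsmul := zsmulRec

instance : Nontrivial K := ⟨(0 : K), 1, by decide⟩

instance : NoZeroDivisors K :=
  ⟨fun {a b} h => by revert h; revert a b; decide⟩

instance : IsDomain K := NoZeroDivisors.to_isDomain K

noncomputable instance : Field K := Fintype.fieldOfDomain K

instance : CharP K 2 :=
  (CharP.charP_iff_prime_eq_zero Nat.prime_two).mpr
    (by rw [show ((2 : ℕ) : K) = 1 + 1 by rw [Nat.cast_ofNat, ← one_add_one_eq_two]]; decide)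

noncomputable instance : Algebra (ZMod 2) K := ZMod.algebra K 2

/-- The embedding of `K` into `V`. -/
def toV : K → (Fin 7 → ZMod 2) := fun k i =>
  if i = 0 then ((Fin.val (k : Fin 8)) % 2 : ℕ)
  else if i = 1 then ((Fin.val (k : Fin 8)) / 2 % 2 : ℕ)
  else if i = 2 then ((Fin.val (k : Fin 8)) / 4 % 2 : ℕ)
  else 0

lemma toV_inj : Function.Injective toV := by decide

lemma toV_add : ∀ a b : K, toV (a + b) = toV a + toV b := by decide

lemma toV_one : toV 1 = e 0 := by decide

lemma toV_mul : ∀ a b : K, toV (a * b) = star (toV a) (toV b) := by decide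

lemma toV_decomp : ∀ k : K, toV k = toV k 0 • e 0 + toV k 1 • e 1 + toV k 2 • e 2 := by
  decide

lemma range_toV :
    Set.range toV = (Submodule.span (ZMod 2) {e 0, e 1, e 2} : Set (Fin 7 → ZMod 2)) := by
  apply Set.Subset.antisymm
  · rintro v ⟨k, rfl⟩
    rw [toV_decomp k]
    have h0 : e 0 ∈ Submodule.span (ZMod 2) {e 0, e 1, e 2} :=
      Submodule.subset_span (by simp)
    have h1 : e 1 ∈ Submodule.span (ZMod 2) {e 0, e 1, e 2} :=
      Submodule.subset_span (by simp)
    have h2 : e 2 ∈ Submodule.span (ZMod 2) {e 0, e 1, e 2} :=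
      Submodule.subset_span (by simp)
    exact Submodule.add_mem _ (Submodule.add_mem _ (Submodule.smul_mem _ _ h0)
      (Submodule.smul_mem _ _ h1)) (Submodule.smul_mem _ _ h2)
  · intro v hv
    induction hv using Submodule.span_induction with
    | mem x hx =>
      rcases hx with h | h | h
      · exact ⟨(1 : Fin 8), by subst h; decide⟩
      · exact ⟨(2 : Fin 8), by subst h; decide⟩
      · exact ⟨(4 : Fin 8), by subst h; decide⟩
    | zero => exact ⟨(0 : Fin 8), by decide⟩
    | add x y _ _ hx hy =>
      obtain ⟨a, rfl⟩ := hx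
      obtain ⟨b, rfl⟩ := hy
      have : ∀ a b : K, ∃ c : K, toV a + toV b = toV c := by decide
      obtain ⟨c, hc⟩ := this a b
      exact ⟨c, hc.symm⟩
    | smul c x _ hx =>
      obtain ⟨a, rfl⟩ := hx
      have : ∀ (c : ZMod 2) (a : K), ∃ b : K, c • toV a = toV b := by decide
      obtain ⟨b, hb⟩ := this c a
      exact ⟨b, hb.symm⟩

theorem stmt_10 :
    ∃ φ : GaloisField 2 3 → (Fin 7 → ZMod 2),
      Function.Injective φ ∧
      (∀ x y, φ (x + y) = φ x + φ y) ∧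
      φ 1 = e 0 ∧
      (∀ x y, φ (x * y) = star (φ x) (φ y)) ∧
      Set.range φ = (Submodule.span (ZMod 2) {e 0, e 1, e 2} : Set (Fin 7 → ZMod 2)) := by
  have hcard : Nat.card K = 2 ^ 3 := by
    rw [Nat.card_eq_fintype_card]; decide
  let ψ : GaloisField 2 3 ≃ₐ[ZMod 2] K :=
    (GaloisField.algEquivGaloisField (p := 2) (n := 3) (K := K) hcard).symm
  refine ⟨toV ∘ ψ, toV_inj.comp ψ.injective, ?_, ?_, ?_, ?_⟩
  · intro x y
    simp only [Function.comp_apply, _root_.map_add, toV_add]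
  · simp only [Function.comp_apply, _root_.map_one, toV_one]
  · intro x y
    simp only [Function.comp_apply, _root_.map_mul, toV_mul]
  · rw [Set.range_comp, ψ.surjective.range_eq, Set.image_univ, range_toV]
end

section
/- The multiplication ⋆ on V is not associative: there exist x, y, z ∈ V with (x ⋆ y) ⋆ z ≠ x ⋆ (y ⋆ z). (Hence (V, +, ⋆) is a proper semifield, not a field: indeed, were ⋆ associative, (V, +, ⋆) would be the field with 2⁷ elements containing a subfield of order 2³, contradicting 3 ∤ 7.) -/
open Matrix

theorem stmt_12 :
    ∃ x y z : Fin 7 → ZMod 2, star (star x y) z ≠ star x (star y z) := by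
  exact ⟨e 1, e 1, e 3, by decide⟩
end

section
/- For the opposite multiplication x ⋆ᵒᵖ y := y ⋆ x on V, there exists an injective additive map φ : GF(8) → V with φ(1) = e₁ and φ(x·y) = φ(x) ⋆ᵒᵖ φ(y) for all x, y ∈ GF(8); i.e., the opposite semifield (V, +, ⋆ᵒᵖ) also contains a copy of F₈ and hence is also fractional. -/
/-!
On `span {e 0, e 1, e 2}` the opposite product `x ⋆ᵒᵖ y = y ⋆ x` multiplies like
`F₂[X]/(X³ + X + 1)` with `e 1` in the role of `X` (a finite matrix computation). `GF(8)`
contains a root `g` of `X³ + X + 1`, since its nonzero elements other than `1` are roots of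
`X³ + X + 1` or of its reciprocal `X³ + X² + 1`. As `[GF(8) : F₂] = 3`, the powers `1, g, g²`
form a basis, and the linear map sending them to `e 0, e 1, e 2` is multiplicative on pairs of
basis vectors, hence everywhere by bilinearity. A nonzero map that is multiplicative in this
sense on a field is injective.
-/

open Matrix

open Module

theorem exists_pow_three_eq_add_one {K : Type*} [Field K] [Finite K] [CharP K 2]
    (hK : Nat.card K = 8) : ∃ g : K, g ^ 3 = g + 1 := by
  classical
  have := Fintype.ofFinite K
  rw [Nat.card_eq_fintype_card] at hK
  obtain ⟨x, -, hx⟩ : ∃ x ∈ (Finset.univ : Finset K), x ∉ ({0, 1} : Finset K) :=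
    Finset.exists_mem_notMem_of_card_lt_card (Finset.card_le_two.trans_lt (by simp [hK]))
  simp only [Finset.mem_insert, Finset.mem_singleton, not_or] at hx
  obtain ⟨hx0, hx1⟩ := hx
  have h2 : (2 : K) = 0 := CharTwo.two_eq_zero
  -- `X⁸ - X = X (X + 1) (X³ + X + 1) (X³ + X² + 1)` over `F₂`
  have hfactor : x * (x + 1) * ((x ^ 3 + x + 1) * (x ^ 3 + x ^ 2 + 1)) = 0 := by
    have h8 : x ^ 8 = x := by simpa [hK] using FiniteField.pow_card x
    linear_combination h8 +
      (x ^ 7 + x ^ 6 + 2 * x ^ 5 + 2 * x ^ 4 + x ^ 3 + x ^ 2 + x) * h2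
  have hx1' : x + 1 ≠ 0 := fun h ↦ hx1 (by linear_combination h - h2)
  have hcubic : (x ^ 3 + x + 1) * (x ^ 3 + x ^ 2 + 1) = 0 :=
    (mul_eq_zero.mp hfactor).resolve_left (mul_ne_zero hx0 hx1')
  rcases mul_eq_zero.mp hcubic with h | h
  · exact ⟨x, by linear_combination h - (x + 1) * h2⟩
  · refine ⟨x⁻¹, ?_⟩
    field_simp
    linear_combination -h + h2

theorem minpoly_natDegree_eq_three {K : Type*} [Field K] [Algebra (ZMod 2) K]
    (hK : finrank (ZMod 2) K = 3) {g : K} (hg : g ^ 3 = g + 1) :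
    (minpoly (ZMod 2) g).natDegree = 3 := by
  have : FiniteDimensional (ZMod 2) K := .of_finrank_pos (by omega)
  have hdvd := minpoly.degree_dvd (IsIntegral.of_finite (ZMod 2) g)
  rw [hK, Nat.dvd_prime Nat.prime_three] at hdvd
  refine hdvd.resolve_left fun h ↦ ?_
  obtain ⟨c, rfl⟩ := minpoly.natDegree_eq_one_iff.mp h
  obtain rfl | rfl := (by decide : ∀ c : ZMod 2, c = 0 ∨ c = 1) c <;> simp at hg

theorem linearIndependent_pow_three {K : Type*} [Field K] [Algebra (ZMod 2) K]
    (hK : finrank (ZMod 2) K = 3) {g : K} (hg : g ^ 3 = g + 1) :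
    LinearIndependent (ZMod 2) fun i : Fin 3 ↦ g ^ (i : ℕ) := by
  have := linearIndependent_pow (K := ZMod 2) g
  rwa [minpoly_natDegree_eq_three hK hg] at this

theorem map_mul_eq_of_basis {ι R K V : Type*} [CommSemiring R] [Semiring K] [Algebra R K]
    [AddCommMonoid V] [Module R V] (b : Basis ι R K) (ψ : K →ₗ[R] V) (β : V →ₗ[R] V →ₗ[R] V)
    (h : ∀ i j, ψ (b i * b j) = β (ψ (b j)) (ψ (b i))) (x y : K) :
    ψ (x * y) = β (ψ y) (ψ x) := by
  have hext : (LinearMap.mul R K).compr₂ ψ = β.flip.compl₁₂ ψ ψ := LinearMap.ext_basis b b h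
  exact LinearMap.congr_fun₂ hext x y

theorem injective_of_map_mul_eq {R K V : Type*} [CommSemiring R] [DivisionRing K] [Algebra R K]
    [AddCommGroup V] [Module R V] (ψ : K →ₗ[R] V) (β : V →ₗ[R] V →ₗ[R] V) (h1 : ψ 1 ≠ 0)
    (hmul : ∀ x y, ψ (x * y) = β (ψ y) (ψ x)) : Function.Injective ψ := by
  refine (injective_iff_map_eq_zero ψ).mpr fun x hx ↦ ?_
  by_contra hx0
  apply h1
  rw [← inv_mul_cancel₀ hx0, hmul, hx, map_zero, LinearMap.zero_apply]

noncomputable def starBilin :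
    (Fin 7 → ZMod 2) →ₗ[ZMod 2] (Fin 7 → ZMod 2) →ₗ[ZMod 2] (Fin 7 → ZMod 2) :=
  Matrix.toLin'.toLinearMap ∘ₗ ∑ i, (LinearMap.proj i).smulRight (A i)

theorem starBilin_apply (x y : Fin 7 → ZMod 2) : starBilin x y = star x y := by
  simp [starBilin, _root_.star, Matrix.toLin'_apply, Matrix.sum_mulVec, Matrix.smul_mulVec]

theorem map_pow_mul_pow_eq_star {K : Type*} [Semiring K] {g : K} (hg : g ^ 3 = g + 1)
    (ψ : K →+ (Fin 7 → ZMod 2)) (h0 : ψ 1 = e 0) (h1 : ψ g = e 1) (h2 : ψ (g ^ 2) = e 2)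
    (i j : Fin 3) : ψ (g ^ (i : ℕ) * g ^ (j : ℕ)) = star (ψ (g ^ (j : ℕ))) (ψ (g ^ (i : ℕ))) := by
  have hg4 : g ^ 4 = g ^ 2 + g := by rw [pow_succ, hg, add_mul, one_mul, sq]
  fin_cases i <;> fin_cases j <;>
    simp only [← pow_add] <;> norm_num [hg, hg4, h0, h1, h2] <;> decide

theorem stmt_13 :
    ∃ φ : GaloisField 2 3 → (Fin 7 → ZMod 2),
      Function.Injective φ ∧
      (∀ x y, φ (x + y) = φ x + φ y) ∧
      φ 1 = e 0 ∧
      (∀ x y, φ (x * y) = star (φ y) (φ x)) := by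
  have hrank : finrank (ZMod 2) (GaloisField 2 3) = 3 := GaloisField.finrank 2 three_ne_zero
  obtain ⟨g, hg⟩ := exists_pow_three_eq_add_one (GaloisField.card 2 3 three_ne_zero)
  let b := basisOfLinearIndependentOfCardEqFinrank (linearIndependent_pow_three hrank hg)
    (by rw [hrank, Fintype.card_fin])
  let ψ := b.constr (ZMod 2) fun i ↦ e (Fin.castLE (by norm_num) i)
  have hψ (i : Fin 3) : ψ (g ^ (i : ℕ)) = e (Fin.castLE (by norm_num) i) := by
    simpa [b] using b.constr_basis (ZMod 2) _ i
  have hψ1 : ψ 1 = e 0 := by simpa using hψ 0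
  have hmul (x y) : ψ (x * y) = star (ψ y) (ψ x) := by
    rw [← starBilin_apply]
    refine map_mul_eq_of_basis b ψ starBilin (fun i j ↦ ?_) x y
    simp only [b, coe_basisOfLinearIndependentOfCardEqFinrank, starBilin_apply]
    exact map_pow_mul_pow_eq_star hg ψ.toAddMonoidHom hψ1 (by simpa using hψ 1) (hψ 2) i j
  have hinj := injective_of_map_mul_eq ψ starBilin (by rw [hψ1]; decide)
    (by simpa only [starBilin_apply] using hmul)
  exact ⟨ψ, hinj, map_add ψ, hψ1, hmul⟩
end
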